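/- arXiv:1508.03117 — 3 statements merged into one kernel-verified Lean document; each statement's English description precedes it below -/
import Mathlib

section
/- Let D be a real d×n matrix with all columns nonzero and let μ(D) denote its mutual coherence. Suppose α ∈ ℝ^n satisfies ‖α‖₀ < (1/2)(1 + 1/μ(D)). Then α is the unique sparsest solution of the linear system x = Dα: for every β ∈ ℝ^n with Dβ = Dα and β ≠ α, one has ‖β‖₀ > ‖α‖₀. -/
/-!
Normalising the columns of `D` does not change the coherence, and `Dβ = Dα` puts the nonzero
vector `γ = β - α` (rescaled by the column norms) in the kernel of the normalised Gram matrix,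
whose diagonal is `1` and whose off-diagonal entries are bounded by `μ = μ(D)`. Reading the row
of a largest entry of `γ` gives `1 ≤ (‖γ‖₀ - 1) μ`, i.e. `‖γ‖₀ ≥ 1 + 1/μ`, while
`‖γ‖₀ ≤ ‖α‖₀ + ‖β‖₀` and `2 ‖α‖₀ < 1 + 1/μ`.
-/

open Matrix

/-- The Euclidean norm of the `i`-th column of a matrix. -/
noncomputable def colNorm {m n : ℕ} (M : Matrix (Fin m) (Fin n) ℝ) (i : Fin n) : ℝ :=
  Real.sqrt (∑ k, M k i ^ 2)

/-- The mutual coherence of a matrix: the largest absolute normalized inner product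
between distinct columns. -/
noncomputable def mutualCoherence {m n : ℕ} (M : Matrix (Fin m) (Fin n) ℝ) : ℝ :=
  sSup {x : ℝ | ∃ i j : Fin n, i ≠ j ∧
    x = |∑ k, M k i * M k j| / (colNorm M i * colNorm M j)}

/-- The ℓ₀-"norm": the number of nonzero entries of a vector. -/
noncomputable def l0norm {n : ℕ} (v : Fin n → ℝ) : ℕ := {i | v i ≠ 0}.ncard

open Finset

theorem l0norm_eq_card {n : ℕ} (v : Fin n → ℝ) : l0norm v = #{i | v i ≠ 0} := by
  rw [l0norm, Set.ncard_eq_toFinset_card', Set.toFinset_ofPred]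

theorem l0norm_mul_left {n : ℕ} {c : Fin n → ℝ} (hc : ∀ i, c i ≠ 0) (v : Fin n → ℝ) :
    l0norm (fun i => c i * v i) = l0norm v := by
  simp [l0norm, hc]

theorem l0norm_sub_le {n : ℕ} (u v : Fin n → ℝ) : l0norm (u - v) ≤ l0norm u + l0norm v := by
  unfold l0norm
  calc _ ≤ ({i | u i ≠ 0} ∪ {i | v i ≠ 0}).ncard :=
        Set.ncard_le_ncard (fun i hi => by by_contra h; simp_all) (Set.toFinite _)
    _ ≤ _ := Set.ncard_union_le _ _

theorem one_le_sub_one_mul_of_mulVec_eq_zero {n : ℕ} {C : Matrix (Fin n) (Fin n) ℝ} {μ : ℝ}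
    (hdiag : ∀ i, C i i = 1) (hoff : ∀ i j, i ≠ j → |C i j| ≤ μ)
    {w : Fin n → ℝ} (hw : C *ᵥ w = 0) (hw0 : w ≠ 0) :
    1 ≤ ((l0norm w : ℝ) - 1) * μ := by
  obtain ⟨i, hi⟩ := Function.ne_iff.mp hw0
  have : Nonempty (Fin n) := ⟨i⟩
  obtain ⟨i₀, hmax⟩ := Finite.exists_max fun j => |w j|
  set S : Finset (Fin n) := {j | w j ≠ 0}
  have hpos : 0 < |w i₀| := (abs_pos.mpr hi).trans_le (hmax i)
  have hi₀S : i₀ ∈ S := by simpa [S] using hpos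
  have hrow : w i₀ = -∑ j ∈ S.erase i₀, C i₀ j * w j := by
    have h := congrFun hw i₀
    rw [mulVec, dotProduct, ← sum_filter_of_ne fun j _ h => right_ne_zero_of_mul h,
      ← add_sum_erase _ _ hi₀S, hdiag, one_mul] at h
    simpa [eq_neg_iff_add_eq_zero] using h
  have hS : |w i₀| * 1 ≤ |w i₀| * (((#S : ℝ) - 1) * μ) := calc
    |w i₀| * 1 = |∑ j ∈ S.erase i₀, C i₀ j * w j| := by rw [mul_one, hrow, abs_neg]
    _ ≤ ∑ j ∈ S.erase i₀, |C i₀ j| * |w j| := by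
      simpa only [abs_mul] using abs_sum_le_sum_abs (fun j => C i₀ j * w j) (S.erase i₀)
    _ ≤ ∑ j ∈ S.erase i₀, μ * |w i₀| := by
      refine sum_le_sum fun j hj => ?_
      have hC := hoff i₀ j (ne_of_mem_erase hj).symm
      exact mul_le_mul hC (hmax j) (abs_nonneg _) ((abs_nonneg _).trans hC)
    _ = |w i₀| * (((#S : ℝ) - 1) * μ) := by
      rw [sum_const, card_erase_of_mem hi₀S, nsmul_eq_mul,
        Nat.cast_sub (card_pos.mpr ⟨_, hi₀S⟩)]
      push_cast
      ring
  rw [l0norm_eq_card]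
  exact le_of_mul_le_mul_left hS hpos

theorem colNorm_nonneg {m n : ℕ} (M : Matrix (Fin m) (Fin n) ℝ) (i : Fin n) :
    0 ≤ colNorm M i :=
  Real.sqrt_nonneg _

theorem sq_colNorm {m n : ℕ} (M : Matrix (Fin m) (Fin n) ℝ) (i : Fin n) :
    colNorm M i ^ 2 = ∑ k, M k i ^ 2 :=
  Real.sq_sqrt (sum_nonneg fun _ _ => sq_nonneg _)

theorem colNorm_ne_zero {m n : ℕ} {M : Matrix (Fin m) (Fin n) ℝ} {i : Fin n}
    (h : ∃ k, M k i ≠ 0) : colNorm M i ≠ 0 := by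
  obtain ⟨k, hk⟩ := h
  refine (Real.sqrt_pos.mpr ?_).ne'
  exact sum_pos' (fun _ _ => sq_nonneg _) ⟨k, mem_univ k, by positivity⟩

theorem abs_sum_mul_le_colNorm_mul {m n : ℕ} (M : Matrix (Fin m) (Fin n) ℝ) (i j : Fin n) :
    |∑ k, M k i * M k j| ≤ colNorm M i * colNorm M j := by
  rw [colNorm, colNorm, ← Real.sqrt_mul (sum_nonneg fun _ _ => sq_nonneg _)]
  exact Real.abs_le_sqrt (sum_mul_sq_le_sq_mul_sq _ _ _)

theorem le_mutualCoherence {m n : ℕ} (M : Matrix (Fin m) (Fin n) ℝ) {i j : Fin n} (hij : i ≠ j) :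
    |∑ k, M k i * M k j| / (colNorm M i * colNorm M j) ≤ mutualCoherence M := by
  refine le_csSup ⟨1, ?_⟩ ⟨i, j, hij, rfl⟩
  rintro _ ⟨i, j, -, rfl⟩
  exact div_le_one_of_le₀ (abs_sum_mul_le_colNorm_mul M i j)
    (mul_nonneg (colNorm_nonneg M _) (colNorm_nonneg M _))

theorem mutualCoherence_nonneg {m n : ℕ} (M : Matrix (Fin m) (Fin n) ℝ) :
    0 ≤ mutualCoherence M := by
  refine Real.sSup_nonneg ?_
  rintro _ ⟨i, j, -, rfl⟩
  exact div_nonneg (abs_nonneg _) (mul_nonneg (colNorm_nonneg M _) (colNorm_nonneg M _))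

noncomputable def normalizeColumns {m n : ℕ} (M : Matrix (Fin m) (Fin n) ℝ) :
    Matrix (Fin m) (Fin n) ℝ :=
  M * diagonal fun i => (colNorm M i)⁻¹

section normalizeColumns

variable {m n : ℕ} (M : Matrix (Fin m) (Fin n) ℝ)

theorem gram_normalizeColumns_apply (i j : Fin n) :
    ((normalizeColumns M)ᵀ * normalizeColumns M) i j =
      (∑ k, M k i * M k j) / (colNorm M i * colNorm M j) := by
  rw [mul_apply]
  simp only [transpose_apply, normalizeColumns, mul_diagonal, sum_div]
  exact sum_congr rfl fun _ _ => by ring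

theorem gram_normalizeColumns_apply_self {i : Fin n} (h : ∃ k, M k i ≠ 0) :
    ((normalizeColumns M)ᵀ * normalizeColumns M) i i = 1 := by
  rw [gram_normalizeColumns_apply, ← sq, div_eq_one_iff_eq (pow_ne_zero 2 (colNorm_ne_zero h)),
    sq_colNorm]
  simp only [sq]

theorem abs_gram_normalizeColumns_apply_le {i j : Fin n} (hij : i ≠ j) :
    |((normalizeColumns M)ᵀ * normalizeColumns M) i j| ≤ mutualCoherence M := by
  rw [gram_normalizeColumns_apply, abs_div,
    abs_of_nonneg (mul_nonneg (colNorm_nonneg M _) (colNorm_nonneg M _))]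
  exact le_mutualCoherence M hij

theorem normalizeColumns_mulVec (hcols : ∀ i, ∃ k, M k i ≠ 0) (γ : Fin n → ℝ) :
    normalizeColumns M *ᵥ (fun i => colNorm M i * γ i) = M *ᵥ γ := by
  rw [normalizeColumns, ← mulVec_mulVec]
  congr 1
  ext i
  rw [mulVec_diagonal, inv_mul_cancel_left₀ (colNorm_ne_zero (hcols i))]

end normalizeColumns

/-- The spark bound `spark M ≥ 1 + 1/μ(M)`. -/
theorem one_add_one_div_mutualCoherence_le_l0norm {m n : ℕ} {M : Matrix (Fin m) (Fin n) ℝ}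
    (hcols : ∀ i, ∃ k, M k i ≠ 0) {γ : Fin n → ℝ} (hγ : M *ᵥ γ = 0) (hγ0 : γ ≠ 0) :
    1 + 1 / mutualCoherence M ≤ l0norm γ := by
  have hw : ((normalizeColumns M)ᵀ * normalizeColumns M) *ᵥ (fun i => colNorm M i * γ i) = 0 := by
    rw [← mulVec_mulVec, normalizeColumns_mulVec M hcols, hγ, mulVec_zero]
  have hw0 : (fun i => colNorm M i * γ i) ≠ 0 := by
    obtain ⟨i, hi⟩ := Function.ne_iff.mp hγ0
    exact Function.ne_iff.mpr ⟨i, mul_ne_zero (colNorm_ne_zero (hcols i)) hi⟩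
  have h := one_le_sub_one_mul_of_mulVec_eq_zero
    (fun i => gram_normalizeColumns_apply_self M (hcols i))
    (fun _ _ => abs_gram_normalizeColumns_apply_le M) hw hw0
  rw [l0norm_mul_left fun i => colNorm_ne_zero (hcols i)] at h
  have hμ : 0 < mutualCoherence M :=
    (mutualCoherence_nonneg M).lt_of_ne fun h0 => by rw [← h0, mul_zero] at h; linarith
  have : 1 / mutualCoherence M ≤ l0norm γ - 1 := by rw [div_le_iff₀ hμ]; linarith
  linarith

/-- if `‖α‖₀ < (1/2)(1 + 1/μ(D))` then `α` is the unique sparsest solution of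
the system `x = D α`. -/
theorem stmt_0 {d n : ℕ} (D : Matrix (Fin d) (Fin n) ℝ)
    (hcols : ∀ i : Fin n, ∃ j, D j i ≠ 0)
    (α : Fin n → ℝ)
    (hα : (l0norm α : ℝ) < (1 / 2) * (1 + 1 / mutualCoherence D)) :
    ∀ β : Fin n → ℝ, D.mulVec β = D.mulVec α → β ≠ α → l0norm α < l0norm β := by
  intro β hβ hne
  have hspark := one_add_one_div_mutualCoherence_le_l0norm hcols
    (by rw [mulVec_sub, hβ, sub_self] : D *ᵥ (β - α) = 0) (sub_ne_zero.mpr hne)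
  have hsub : (l0norm (β - α) : ℝ) ≤ l0norm β + l0norm α := by exact_mod_cast l0norm_sub_le β α
  exact_mod_cast (by linarith : (l0norm α : ℝ) < l0norm β)
end

section
/- (Welch bound) Let M be a real m×n matrix with n ≥ 2, m ≥ 1, and all columns nonzero. Then its mutual coherence satisfies μ(M) ≥ √((n − m)/(m(n − 1))). -/
open Matrix

/-- Welch bound: for an m×n matrix with nonzero columns, n ≥ 2, m ≥ 1,
`μ(M) ≥ √((n − m)/(m(n − 1)))`. -/
theorem stmt_2 {m n : ℕ} (hn : 2 ≤ n) (hm : 1 ≤ m)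
    (M : Matrix (Fin m) (Fin n) ℝ) (hcols : ∀ i : Fin n, ∃ j, M j i ≠ 0) :
    Real.sqrt (((n : ℝ) - (m : ℝ)) / ((m : ℝ) * ((n : ℝ) - 1))) ≤ mutualCoherence M := by
  set c : Fin n → ℝ := colNorm M with hc
  -- columns norms are positive
  have hcpos : ∀ i, 0 < c i := by
    intro i
    obtain ⟨j, hj⟩ := hcols i
    apply Real.sqrt_pos.mpr
    apply Finset.sum_pos' (fun k _ => sq_nonneg _) ⟨j, Finset.mem_univ j, by positivity⟩
  have hcsq : ∀ i, c i ^ 2 = ∑ k, M k i ^ 2 := by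
    intro i
    exact Real.sq_sqrt (Finset.sum_nonneg fun k _ => sq_nonneg _)
  -- normalized matrix
  set N : Matrix (Fin m) (Fin n) ℝ := fun k i => M k i / c i with hN
  have hNunit : ∀ i, ∑ k, N k i ^ 2 = 1 := by
    intro i
    have : ∑ k, N k i ^ 2 = (∑ k, M k i ^ 2) / c i ^ 2 := by
      rw [Finset.sum_div]
      exact Finset.sum_congr rfl fun k _ => by rw [div_pow]
    rw [this, ← hcsq i, div_self (ne_of_gt (pow_pos (hcpos i) 2))]
  set G : Matrix (Fin n) (Fin n) ℝ := Nᵀ * N with hG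
  have hGapp : ∀ i j, G i j = ∑ k, N k i * N k j := by
    intro i j; simp [hG, Matrix.mul_apply, Matrix.transpose_apply]
  have hGsymm : ∀ i j, G i j = G j i := by
    intro i j; rw [hGapp, hGapp]; exact Finset.sum_congr rfl fun k _ => mul_comm _ _
  have hGdiag : ∀ i, G i i = 1 := by
    intro i; rw [hGapp]
    simpa [sq] using hNunit i
  -- the set defining mutual coherence
  set S : Set ℝ := {x : ℝ | ∃ i j : Fin n, i ≠ j ∧
    x = |∑ k, M k i * M k j| / (colNorm M i * colNorm M j)} with hS
  have hscal : ∀ i j : Fin n, |∑ k, M k i * M k j| / (c i * c j) = |G i j| := by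
    intro i j
    rw [hGapp]
    have : ∑ k, N k i * N k j = (∑ k, M k i * M k j) / (c i * c j) := by
      rw [Finset.sum_div]
      exact Finset.sum_congr rfl fun k _ => by rw [div_mul_div_comm]
    rw [this, abs_div, abs_of_pos (mul_pos (hcpos i) (hcpos j))]
  -- the set is bounded above by 1 (Cauchy–Schwarz)
  have hGle1 : ∀ i j, |G i j| ≤ 1 := by
    intro i j
    have h := Finset.sum_mul_sq_le_sq_mul_sq Finset.univ (fun k => N k i) (fun k => N k j)
    rw [hNunit i, hNunit j, one_mul] at h
    rw [← Real.sqrt_one, ← Real.sqrt_sq_eq_abs]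
    exact Real.sqrt_le_sqrt h
  have hBdd : BddAbove S := by
    refine ⟨1, fun x hx => ?_⟩
    obtain ⟨i, j, hij, rfl⟩ := hx
    rw [← hc, hscal]
    exact hGle1 i j
  -- mutual coherence bounds each off-diagonal entry
  set μ : ℝ := mutualCoherence M with hμ
  have hGleμ : ∀ i j : Fin n, i ≠ j → |G i j| ≤ μ := by
    intro i j hij
    rw [← hscal]
    exact le_csSup hBdd ⟨i, j, hij, by rw [hc]⟩
  have hμ0 : 0 ≤ μ := by
    have h01 : (⟨0, by omega⟩ : Fin n) ≠ ⟨1, by omega⟩ := by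
      simp [Fin.ext_iff]
    calc (0:ℝ) ≤ |G ⟨0, by omega⟩ ⟨1, by omega⟩| := abs_nonneg _
      _ ≤ μ := hGleμ _ _ h01
  -- trace identities
  set B : Matrix (Fin m) (Fin m) ℝ := N * Nᵀ with hB
  have htrG : Matrix.trace G = (n : ℝ) := by
    simp [Matrix.trace, Matrix.diag, hGdiag]
  have htrB : Matrix.trace B = (n : ℝ) := by
    rw [hB, Matrix.trace_mul_comm, ← hG, htrG]
  have htr2 : Matrix.trace (G * G) = Matrix.trace (B * B) := by
    rw [hG, hB]
    calc Matrix.trace (Nᵀ * N * (Nᵀ * N)) = Matrix.trace (Nᵀ * (N * (Nᵀ * N))) := by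
          rw [Matrix.mul_assoc]
      _ = Matrix.trace (N * (Nᵀ * N) * Nᵀ) := by rw [Matrix.trace_mul_comm]
      _ = Matrix.trace (N * Nᵀ * (N * Nᵀ)) := by
          rw [Matrix.mul_assoc, Matrix.mul_assoc, Matrix.mul_assoc]
  have htrGG : Matrix.trace (G * G) = ∑ i, ∑ j, G i j ^ 2 := by
    simp only [Matrix.trace, Matrix.diag, Matrix.mul_apply]
    exact Finset.sum_congr rfl fun i _ => Finset.sum_congr rfl fun j _ => by
      rw [← hGsymm i j, sq]
  have htrBB : Matrix.trace (B * B) = ∑ k, ∑ l, B k l ^ 2 := by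
    have hBsymm : ∀ k l, B k l = B l k := by
      intro k l
      simp only [hB, Matrix.mul_apply, Matrix.transpose_apply]
      exact Finset.sum_congr rfl fun i _ => mul_comm _ _
    simp only [Matrix.trace, Matrix.diag, Matrix.mul_apply]
    exact Finset.sum_congr rfl fun k _ => Finset.sum_congr rfl fun l _ => by
      rw [← hBsymm k l, sq]
  -- lower bound on trace(G*G): n² ≤ m * trace(G*G)
  have hlow : (n : ℝ)^2 ≤ (m : ℝ) * Matrix.trace (G * G) := by
    have h1 : (∑ k, B k k) ^ 2 ≤ (m : ℝ) * ∑ k, B k k ^ 2 := by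
      have := Finset.sum_mul_sq_le_sq_mul_sq Finset.univ (fun _ : Fin m => (1:ℝ))
        (fun k => B k k)
      simpa [Finset.card_univ] using this
    have h2 : ∑ k, B k k ^ 2 ≤ ∑ k, ∑ l, B k l ^ 2 :=
      Finset.sum_le_sum fun k _ =>
        Finset.single_le_sum (f := fun l => B k l ^ 2) (fun l _ => sq_nonneg _)
          (Finset.mem_univ k)
    have h3 : ∑ k, B k k = (n : ℝ) := htrB
    calc (n:ℝ)^2 = (∑ k, B k k)^2 := by rw [h3]
      _ ≤ (m : ℝ) * ∑ k, B k k ^ 2 := h1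
      _ ≤ (m : ℝ) * ∑ k, ∑ l, B k l ^ 2 := by
          apply mul_le_mul_of_nonneg_left h2 (by positivity)
      _ = (m : ℝ) * Matrix.trace (B * B) := by rw [htrBB]
      _ = (m : ℝ) * Matrix.trace (G * G) := by rw [htr2]
  -- upper bound on trace(G*G)
  have hup : Matrix.trace (G * G) ≤ (n : ℝ) * (1 + ((n : ℝ) - 1) * μ ^ 2) := by
    rw [htrGG]
    have hrow : ∀ i : Fin n, ∑ j, G i j ^ 2 ≤ 1 + ((n : ℝ) - 1) * μ ^ 2 := by
      intro i
      have hsplit : ∑ j, G i j ^ 2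
          = ∑ j ∈ Finset.univ.erase i, G i j ^ 2 + G i i ^ 2 :=
        (Finset.sum_erase_add _ _ (Finset.mem_univ i)).symm
      have hoff : ∑ j ∈ Finset.univ.erase i, G i j ^ 2
          ≤ ((n : ℝ) - 1) * μ ^ 2 := by
        have hcard : (Finset.univ.erase i).card = n - 1 := by
          rw [Finset.card_erase_of_mem (Finset.mem_univ i), Finset.card_univ,
            Fintype.card_fin]
        have : ∑ j ∈ Finset.univ.erase i, G i j ^ 2
            ≤ (Finset.univ.erase i).card • (μ ^ 2) := by
          apply Finset.sum_le_card_nsmul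
          intro j hj
          have hji : j ≠ i := Finset.ne_of_mem_erase hj
          have := hGleμ i j (Ne.symm hji)
          calc G i j ^ 2 = |G i j| ^ 2 := (sq_abs _).symm
            _ ≤ μ ^ 2 := by
              apply pow_le_pow_left₀ (abs_nonneg _) this
        rw [hcard] at this
        calc ∑ j ∈ Finset.univ.erase i, G i j ^ 2 ≤ (n - 1 : ℕ) • (μ ^ 2) := this
          _ = ((n - 1 : ℕ) : ℝ) * μ ^ 2 := by rw [nsmul_eq_mul]
          _ = ((n : ℝ) - 1) * μ ^ 2 := by
              rw [Nat.cast_sub (by omega)]; norm_num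
      rw [hsplit, hGdiag i]
      linarith
    calc ∑ i, ∑ j, G i j ^ 2 ≤ ∑ _i : Fin n, (1 + ((n : ℝ) - 1) * μ ^ 2) :=
        Finset.sum_le_sum fun i _ => hrow i
      _ = (n : ℝ) * (1 + ((n : ℝ) - 1) * μ ^ 2) := by
          rw [Finset.sum_const, Finset.card_univ, Fintype.card_fin, nsmul_eq_mul]
  -- combine
  have hmpos : (0:ℝ) < m := by exact_mod_cast hm
  have hnpos : (0:ℝ) < n := by positivity
  have hn1 : (1:ℝ) ≤ (n:ℝ) - 1 := by
    have : (2:ℝ) ≤ n := by exact_mod_cast hn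
    linarith
  have hkey : ((n : ℝ) - (m : ℝ)) / ((m : ℝ) * ((n : ℝ) - 1)) ≤ μ ^ 2 := by
    rw [div_le_iff₀ (by positivity)]
    have h := le_trans hlow (mul_le_mul_of_nonneg_left hup (le_of_lt hmpos))
    nlinarith [h, hnpos, hmpos]
  calc Real.sqrt (((n : ℝ) - (m : ℝ)) / ((m : ℝ) * ((n : ℝ) - 1)))
      ≤ Real.sqrt (μ ^ 2) := Real.sqrt_le_sqrt hkey
    _ = μ := by rw [Real.sqrt_sq hμ0]
end

section
/- (Sufficient decrease of the proximal step) Let E be the space of real m×n matrices, f : E → ℝ differentiable with L-Lipschitz gradient (‖∇f(X) − ∇f(Y)‖_F ≤ L‖X − Y‖_F for all X, Y), g : E → ℝ any function, S ⊆ E a nonempty set, M ∈ S, and α > 0. If M⁺ minimizes N ↦ ⟨∇f(M), N − M⟩ + (1/(2α))‖N − M‖_F² + g(N) over N ∈ S, then f(M⁺) + g(M⁺) ≤ f(M) + g(M) − (1/(2α) − L/2)‖M⁺ − M‖_F². -/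
open Matrix

attribute [local instance] Matrix.normedAddCommGroup Matrix.normedSpace

/-- The Frobenius inner product `⟨A, B⟩ = Σ_{i,j} a_{ij} b_{ij}` of m×n matrices. -/
noncomputable def finner {m n : ℕ} (A B : Matrix (Fin m) (Fin n) ℝ) : ℝ :=
  ∑ i, ∑ j, A i j * B i j

/-- The squared Frobenius norm `‖V‖_F²`. -/
noncomputable def frobSq {m n : ℕ} (V : Matrix (Fin m) (Fin n) ℝ) : ℝ :=
  ∑ i, ∑ j, V i j ^ 2

/-- The Frobenius norm `‖V‖_F`. -/
noncomputable def frobNorm {m n : ℕ} (V : Matrix (Fin m) (Fin n) ℝ) : ℝ :=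
  Real.sqrt (frobSq V)

/-!
Along the segment `t ↦ M + t • (M⁺ - M)` the derivative of `f` drifts from its value at `t = 0`
by at most `L t ‖M⁺ - M‖_F²` (Cauchy–Schwarz plus the Lipschitz bound), so integrating gives the
descent lemma `f(M⁺) ≤ f(M) + ⟨∇f(M), M⁺ - M⟩ + (L/2)‖M⁺ - M‖_F²`. Comparing the minimizer `M⁺`
with the competitor `N = M` bounds `⟨∇f(M), M⁺ - M⟩ + g(M⁺)` by
`g(M) - (1/(2α))‖M⁺ - M‖_F²`, and adding the two inequalities gives the claim.
-/

open Set

lemma le_add_deriv_add_half_of_deriv_sub_le_mul {φ φ' : ℝ → ℝ} {C : ℝ}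
    (hφ : ∀ t ∈ Icc (0 : ℝ) 1, HasDerivAt φ (φ' t) t)
    (hbound : ∀ t ∈ Ioo (0 : ℝ) 1, φ' t - φ' 0 ≤ C * t) :
    φ 1 ≤ φ 0 + φ' 0 + C / 2 := by
  set ψ : ℝ → ℝ := fun t => φ t - t * φ' 0 - C * t ^ 2 / 2
  have hψ : ∀ t ∈ Icc (0 : ℝ) 1, HasDerivAt ψ (φ' t - φ' 0 - C * t) t := fun t ht => by
    have hquad : HasDerivAt (fun s : ℝ => C * s ^ 2 / 2) (C * t) t := by
      refine (((hasDerivAt_pow 2 t).const_mul C).div_const 2).congr_deriv ?_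
      push_cast
      ring
    exact ((hφ t ht).sub ((hasDerivAt_id t).mul_const (φ' 0) |>.congr_deriv (one_mul _))).sub
      hquad
  have hanti : AntitoneOn ψ (Icc 0 1) := by
    refine antitoneOn_of_hasDerivWithinAt_nonpos (f' := fun t => φ' t - φ' 0 - C * t)
      (convex_Icc 0 1) (fun t ht => (hψ t ht).continuousAt.continuousWithinAt)
      (fun t ht => ?_) (fun t ht => ?_)
    · exact (hψ t (interior_subset ht)).hasDerivWithinAt
    · rw [interior_Icc] at ht
      linarith [hbound t ht]
  have hψ_one_le := hanti (left_mem_Icc.2 zero_le_one) (right_mem_Icc.2 zero_le_one) zero_le_one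
  simp only [ψ] at hψ_one_le
  linarith

lemma frobSq_nonneg {m n : ℕ} (A : Matrix (Fin m) (Fin n) ℝ) : 0 ≤ frobSq A :=
  Finset.sum_nonneg fun _ _ => Finset.sum_nonneg fun _ _ => sq_nonneg _

@[simp]
lemma frobSq_zero {m n : ℕ} : frobSq (0 : Matrix (Fin m) (Fin n) ℝ) = 0 := by
  simp [frobSq]

lemma frobNorm_nonneg {m n : ℕ} (A : Matrix (Fin m) (Fin n) ℝ) : 0 ≤ frobNorm A :=
  Real.sqrt_nonneg _

lemma frobNorm_sq {m n : ℕ} (A : Matrix (Fin m) (Fin n) ℝ) : frobNorm A ^ 2 = frobSq A :=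
  Real.sq_sqrt (frobSq_nonneg A)

lemma frobNorm_smul {m n : ℕ} (t : ℝ) (A : Matrix (Fin m) (Fin n) ℝ) :
    frobNorm (t • A) = |t| * frobNorm A := by
  have hsq : frobSq (t • A) = t ^ 2 * frobSq A := by
    simp only [frobSq, Matrix.smul_apply, smul_eq_mul, mul_pow, Finset.mul_sum]
  rw [frobNorm, frobNorm, hsq, Real.sqrt_mul (sq_nonneg t), Real.sqrt_sq_eq_abs]

lemma finner_sub_left {m n : ℕ} (A B C : Matrix (Fin m) (Fin n) ℝ) :
    finner (A - B) C = finner A C - finner B C := by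
  simp only [finner, Matrix.sub_apply, sub_mul, Finset.sum_sub_distrib]

@[simp]
lemma finner_zero_right {m n : ℕ} (A : Matrix (Fin m) (Fin n) ℝ) : finner A 0 = 0 := by
  simp [finner]

lemma finner_le_frobNorm_mul_frobNorm {m n : ℕ} (A B : Matrix (Fin m) (Fin n) ℝ) :
    finner A B ≤ frobNorm A * frobNorm B := by
  have hcs : finner A B ^ 2 ≤ frobSq A * frobSq B := by
    simpa only [finner, frobSq, ← Finset.sum_product'] using
      Finset.sum_mul_sq_le_sq_mul_sq (Finset.univ ×ˢ Finset.univ)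
        (fun p => A p.1 p.2) (fun p => B p.1 p.2)
  refine le_trans (le_abs_self _) (abs_le_of_sq_le_sq ?_ ?_)
  · rwa [mul_pow, frobNorm_sq, frobNorm_sq]
  · exact mul_nonneg (frobNorm_nonneg A) (frobNorm_nonneg B)

lemma le_add_finner_add_half_mul_frobSq {m n : ℕ} (L : ℝ)
    (f : Matrix (Fin m) (Fin n) ℝ → ℝ)
    (f' : Matrix (Fin m) (Fin n) ℝ → Matrix (Fin m) (Fin n) ℝ)
    (hdiff : ∀ X : Matrix (Fin m) (Fin n) ℝ, DifferentiableAt ℝ f X ∧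
      ∀ H : Matrix (Fin m) (Fin n) ℝ, fderiv ℝ f X H = finner (f' X) H)
    (hlip : ∀ X Y : Matrix (Fin m) (Fin n) ℝ, frobNorm (f' X - f' Y) ≤ L * frobNorm (X - Y))
    (X Y : Matrix (Fin m) (Fin n) ℝ) :
    f Y ≤ f X + finner (f' X) (Y - X) + L / 2 * frobSq (Y - X) := by
  set D := Y - X
  have hderiv : ∀ t : ℝ, HasDerivAt (fun s : ℝ => f (X + s • D)) (finner (f' (X + t • D)) D) t := by
    intro t
    have hline : HasDerivAt (fun s : ℝ => X + s • D) D t := by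
      have hsmul : HasDerivAt (fun s : ℝ => s • D) ((1 : ℝ) • D) t :=
        (hasDerivAt_id t).smul_const D
      rw [one_smul] at hsmul
      exact hsmul.const_add X
    rw [← (hdiff (X + t • D)).2 D]
    exact (hdiff (X + t • D)).1.hasFDerivAt.comp_hasDerivAt t hline
  have hdrift : ∀ t ∈ Ioo (0 : ℝ) 1,
      finner (f' (X + t • D)) D - finner (f' (X + (0 : ℝ) • D)) D ≤ L * frobSq D * t := by
    rintro t ⟨ht, -⟩
    calc finner (f' (X + t • D)) D - finner (f' (X + (0 : ℝ) • D)) D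
        = finner (f' (X + t • D) - f' X) D := by rw [zero_smul, add_zero, finner_sub_left]
      _ ≤ frobNorm (f' (X + t • D) - f' X) * frobNorm D := finner_le_frobNorm_mul_frobNorm _ _
      _ ≤ L * frobNorm (t • D) * frobNorm D := by
          gcongr
          · exact frobNorm_nonneg D
          · simpa using hlip (X + t • D) X
      _ = L * frobSq D * t := by
          rw [frobNorm_smul, abs_of_pos ht, ← frobNorm_sq]
          ring
  have h := le_add_deriv_add_half_of_deriv_sub_le_mul (fun t _ => hderiv t) hdrift
  simp only [zero_smul, add_zero, one_smul, D, add_sub_cancel] at h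
  linarith

theorem stmt_13_general {m n : ℕ} (L α : ℝ)
    (f : Matrix (Fin m) (Fin n) ℝ → ℝ)
    (f' : Matrix (Fin m) (Fin n) ℝ → Matrix (Fin m) (Fin n) ℝ)
    (hdiff : ∀ X : Matrix (Fin m) (Fin n) ℝ, DifferentiableAt ℝ f X ∧
      ∀ H : Matrix (Fin m) (Fin n) ℝ, fderiv ℝ f X H = finner (f' X) H)
    (hlip : ∀ X Y : Matrix (Fin m) (Fin n) ℝ, frobNorm (f' X - f' Y) ≤ L * frobNorm (X - Y))
    (g : Matrix (Fin m) (Fin n) ℝ → ℝ)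
    (S : Set (Matrix (Fin m) (Fin n) ℝ))
    (M Mp : Matrix (Fin m) (Fin n) ℝ) (hM : M ∈ S)
    (hmin : ∀ N ∈ S,
      finner (f' M) (Mp - M) + 1 / (2 * α) * frobSq (Mp - M) + g Mp ≤
        finner (f' M) (N - M) + 1 / (2 * α) * frobSq (N - M) + g N) :
    f Mp + g Mp ≤ f M + g M - (1 / (2 * α) - L / 2) * frobSq (Mp - M) := by
  have hdescent := le_add_finner_add_half_mul_frobSq L f f' hdiff hlip M Mp
  have hcompare := hmin M hM
  rw [sub_self, finner_zero_right, frobSq_zero, mul_zero, zero_add, zero_add] at hcompare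
  linarith

/-- sufficient decrease of the proximal step: if `f` is differentiable with
`L`-Lipschitz gradient `f'` (with respect to the Frobenius inner product/norm), `g` is any
function, `S` is a nonempty set, `M ∈ S`, `α > 0`, and `M⁺` minimizes
`N ↦ ⟨∇f(M), N − M⟩ + (1/(2α))‖N − M‖_F² + g(N)` over `S`, then
`f(M⁺) + g(M⁺) ≤ f(M) + g(M) − (1/(2α) − L/2)‖M⁺ − M‖_F²`. -/
theorem stmt_13 {m n : ℕ} (L α : ℝ) (hα : 0 < α)
    (f : Matrix (Fin m) (Fin n) ℝ → ℝ)
    (f' : Matrix (Fin m) (Fin n) ℝ → Matrix (Fin m) (Fin n) ℝ)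
    (hdiff : ∀ X : Matrix (Fin m) (Fin n) ℝ, DifferentiableAt ℝ f X ∧
      ∀ H : Matrix (Fin m) (Fin n) ℝ, fderiv ℝ f X H = finner (f' X) H)
    (hlip : ∀ X Y : Matrix (Fin m) (Fin n) ℝ, frobNorm (f' X - f' Y) ≤ L * frobNorm (X - Y))
    (g : Matrix (Fin m) (Fin n) ℝ → ℝ)
    (S : Set (Matrix (Fin m) (Fin n) ℝ)) (hS : S.Nonempty)
    (M Mp : Matrix (Fin m) (Fin n) ℝ) (hM : M ∈ S) (hMp : Mp ∈ S)
    (hmin : ∀ N ∈ S,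
      finner (f' M) (Mp - M) + 1 / (2 * α) * frobSq (Mp - M) + g Mp ≤
        finner (f' M) (N - M) + 1 / (2 * α) * frobSq (N - M) + g N) :
    f Mp + g Mp ≤ f M + g M - (1 / (2 * α) - L / 2) * frobSq (Mp - M) :=
  stmt_13_general L α f f' hdiff hlip g S M Mp hM hmin
end
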